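/- Let q ≡ 1 (mod 3) be a prime power, n ≥ 2, and i with gcd(i, 2n) = gcd(i, 3n) = 1. Let a ∈ GF(q^{3n})* with (N_{q^{3n}/q}(a))^{(q-1)/3} ≠ 1, and let ω ∈ GF(q^{2n}) \ GF(q^n). Then L_U = { GF(q^{2n})·(a x^{q^i} + xω) : x ∈ GF(q^{3n})* } is a scattered F_q-linear set of rank 3n in PG(2, q^{2n}). -/

import Mathlib

/-!
Let `σ` and `τ` be `x ↦ x ^ q ^ i` and `x ↦ x ^ q ^ n`. Applying `x ↦ x ^ q ^ (3 * n)` to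
`a y^σ + y ω = l (a x^σ + x ω)` gives the same equation with `ω, l` replaced by `τ ω, τ l`.
If `τ l = l`, the two equations force `y = l x` and `l^σ = l`, so `l ∈ GF(q^i) ∩ GF(q^n) = GF(q)`.
Otherwise they can be solved for `y` and `a y^σ` over `GF(q^n)`, and eliminating `y` shows that
`Z = a x^σ / x` satisfies `Z^σ Z = c₁ Z + c₀` with `c₀ ≠ 0` and `c₀, c₁ ∈ GF(q^n)`. Then
`Z τZ (Z^σ - τ Z^σ) = -c₀ (Z - τ Z)`; since `σ` generates `Gal(GF(q^{3n})/GF(q))`, multiplying the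
`σ`-conjugates of this identity gives `N(Z)² = ± N_{q^n/q}(c₀)³` when `Z ∉ GF(q^n)`, while
`N(Z) = N_{q^n/q}(Z)³` when `Z ∈ GF(q^n)`. Either way `N(a) = N(Z)` is a cube in `GF(q)^*`,
a contradiction. Since `ω ∉ GF(q^{3n})`, the map `x ↦ a x^σ + x ω` is injective on
`GF(q^{3n})`, which gives the rank.
-/

open Finset

section Monoid

variable {M : Type*} [CommMonoid M] {q : ℕ}

theorem pow_pow_eq_self_of_pow_eq_self {t : M} (h : t ^ q = t) (m : ℕ) : t ^ q ^ m = t := by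
  induction m with
  | zero => simp
  | succ m ih => rw [pow_succ, pow_mul, ih, h]

theorem periodic_pow_pow {t : M} {N : ℕ} (h : t ^ q ^ N = t) :
    Function.Periodic (fun m => t ^ q ^ m) N := fun m => by
  simp only [pow_add, pow_mul', h]

theorem prod_range_succ_eq_of_eq {f : ℕ → M} {m : ℕ} (h : f m = f 0) :
    ∏ s ∈ range m, f (s + 1) = ∏ s ∈ range m, f s := by
  cases m with
  | zero => simp
  | succ k => rw [prod_range_succ, prod_range_succ' f, h, mul_comm]

theorem Function.Periodic.prod_range_mul {f : ℕ → M} {N i : ℕ} (hf : Function.Periodic f N)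
    (hi : i.Coprime N) : ∏ t ∈ range N, f (i * t) = ∏ t ∈ range N, f t := by
  have hmaps : Set.MapsTo (fun t => i * t % N) (range N : Set ℕ) (range N) := by
    intro t ht
    simp only [coe_range, Set.mem_Iio] at ht ⊢
    exact Nat.mod_lt _ (by omega)
  have hinj : Set.InjOn (fun t => i * t % N) (range N : Set ℕ) := by
    intro t₁ h₁ t₂ h₂ h
    simp only [coe_range, Set.mem_Iio] at h₁ h₂
    have := Nat.ModEq.cancel_left_of_coprime (Nat.coprime_comm.mp hi) h
    rwa [Nat.ModEq, Nat.mod_eq_of_lt h₁, Nat.mod_eq_of_lt h₂] at this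
  have hbij := ((range N).finite_toSet.injOn_iff_bijOn_of_mapsTo hmaps).mp hinj
  exact prod_nbij _ (fun t ht => hmaps ht) hinj hbij.surjOn fun t _ => (hf.map_mod_nat _).symm

/-- For `x ∈ GF(q^m)` this is the norm `N_{q^m/q}(x)`. -/
def frobNorm (q m : ℕ) (x : M) : M := ∏ s ∈ range m, x ^ q ^ s

theorem frobNorm_eq_pow_sum (m : ℕ) (x : M) :
    frobNorm q m x = x ^ ∑ s ∈ range m, q ^ s :=
  prod_pow_eq_pow_sum _ _ _

theorem frobNorm_pow_self {m : ℕ} {x : M} (h : x ^ q ^ m = x) :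
    frobNorm q m x ^ q = frobNorm q m x := by
  rw [frobNorm, ← prod_pow]
  simp_rw [← pow_mul, ← pow_succ]
  exact prod_range_succ_eq_of_eq (f := fun s => x ^ q ^ s) (by simpa using h)

theorem frobNorm_mul_eq_pow {n : ℕ} {x : M} (h : x ^ q ^ n = x) (k : ℕ) :
    frobNorm q (k * n) x = frobNorm q n x ^ k := by
  induction k with
  | zero => simp [frobNorm]
  | succ k ih =>
    rw [add_one_mul, frobNorm, prod_range_add, ← frobNorm, ih, pow_succ]
    congr 1
    refine prod_congr rfl fun s _ => ?_
    simpa [add_comm] using (periodic_pow_pow h).nat_mul k s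

theorem prod_pow_pow_mul_eq_frobNorm {N i : ℕ} {x : M} (h : x ^ q ^ N = x)
    (hi : i.Coprime N) : ∏ t ∈ range N, x ^ q ^ (i * t) = frobNorm q N x :=
  (periodic_pow_pow h).prod_range_mul hi

theorem pow_eq_one_of_sq_eq_mul_cube {N C ε : M} {G : ℕ} (hN : N ^ (3 * G) = 1)
    (hC : C ^ (3 * G) = 1) (hε : ε ^ 2 = 1) (h : N ^ 2 = ε * C ^ 3) : N ^ G = 1 := by
  have h2 : (N ^ G) ^ 2 = ε ^ G := by
    rw [← pow_mul, mul_comm, pow_mul, h, mul_pow, ← pow_mul, hC, mul_one]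
  calc N ^ G = N ^ G * (N ^ G) ^ 3 := by rw [← pow_mul, mul_comm G, hN, mul_one]
    _ = ((N ^ G) ^ 2) ^ 2 := by rw [← pow_succ', ← pow_mul (N ^ G)]
    _ = 1 := by rw [h2, ← pow_mul, mul_comm, pow_mul, hε, one_pow]

end Monoid

section GroupWithZero

variable {G₀ : Type*} [CommGroupWithZero G₀] {q : ℕ}

theorem pow_sub_one_eq_one_of_pow_eq_self {t : G₀} (ht : t ≠ 0) {e : ℕ} (h : t ^ e = t) :
    t ^ (e - 1) = 1 := by
  cases e with
  | zero => simp
  | succ e => rwa [pow_succ, mul_eq_right₀ ht] at h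

theorem pow_pow_gcd_eq_self (hq : q ≠ 0) {t : G₀} {A B : ℕ} (hA : t ^ q ^ A = t)
    (hB : t ^ q ^ B = t) : t ^ q ^ A.gcd B = t := by
  rcases eq_or_ne t 0 with rfl | ht
  · exact zero_pow (pow_ne_zero _ hq)
  have h := pow_gcd_eq_one.mpr
    ⟨pow_sub_one_eq_one_of_pow_eq_self ht hA, pow_sub_one_eq_one_of_pow_eq_self ht hB⟩
  rw [Nat.pow_sub_one_gcd_pow_sub_one] at h
  rw [← pow_sub_one_mul (pow_ne_zero _ hq), h, one_mul]

theorem prod_range_eq_of_mul_succ_eq {a b e : ℕ → G₀} {N : ℕ}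
    (h : ∀ t < N, a t * e (t + 1) = b t * e t) (hN : e N = e 0) (he : ∀ t < N, e t ≠ 0) :
    ∏ t ∈ range N, a t = ∏ t ∈ range N, b t := by
  have hprod : (∏ t ∈ range N, a t) * ∏ t ∈ range N, e (t + 1)
      = (∏ t ∈ range N, b t) * ∏ t ∈ range N, e t := by
    rw [← prod_mul_distrib, ← prod_mul_distrib]
    exact prod_congr rfl fun t ht => h t (mem_range.mp ht)
  rw [prod_range_succ_eq_of_eq hN] at hprod
  exact mul_right_cancel₀ (prod_ne_zero_iff.mpr fun t ht => he t (mem_range.mp ht)) hprod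

theorem frobNorm_pow_sub_one {m : ℕ} {x : G₀} (hx : x ≠ 0) (h : x ^ q ^ m = x) :
    frobNorm q m x ^ (q - 1) = 1 :=
  pow_sub_one_eq_one_of_pow_eq_self (prod_ne_zero_iff.mpr fun _ _ => pow_ne_zero _ hx)
    (frobNorm_pow_self h)

theorem frobNorm_mul_pow_div {m i : ℕ} (a : G₀) {x : G₀} (hx0 : x ≠ 0) (h : x ^ q ^ m = x) :
    frobNorm q m (a * x ^ q ^ i / x) = frobNorm q m a := by
  have hx : (x ^ ∑ s ∈ range m, q ^ s) ^ q ^ i = x ^ ∑ s ∈ range m, q ^ s := by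
    rw [← frobNorm_eq_pow_sum]
    exact pow_pow_eq_self_of_pow_eq_self (frobNorm_pow_self h) i
  rw [frobNorm_eq_pow_sum, frobNorm_eq_pow_sum, div_pow, mul_pow, pow_right_comm x (q ^ i), hx,
    mul_div_assoc, div_self (pow_ne_zero _ hx0), mul_one]

end GroupWithZero

theorem ncard_setOf_pow_eq_self {K : Type*} [Field K] [Fintype K] {d : ℕ}
    (hd : d - 1 ∣ Fintype.card K - 1) : {x : K | x ^ d = x}.ncard = d := by
  classical
  have hK : Fintype.card K - 1 ≠ 0 := by have := Fintype.one_lt_card (α := K); omega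
  have hd₁ : d - 1 ≠ 0 := by
    rintro h
    rw [h, zero_dvd_iff] at hd
    exact hK hd
  obtain ⟨ζ, hζ⟩ : ∃ ζ : K, IsPrimitiveRoot ζ (d - 1) := by
    obtain ⟨g, hg⟩ := IsCyclic.exists_generator (α := Kˣ)
    have hord : orderOf g = Fintype.card K - 1 := by
      rw [orderOf_eq_card_of_forall_mem_zpowers hg, Nat.card_eq_fintype_card, Fintype.card_units]
    have hg' := (hord ▸ IsPrimitiveRoot.orderOf g).pow_of_dvd
      (Nat.div_ne_zero_iff_of_dvd hd |>.mpr ⟨hK, hd₁⟩) (Nat.div_dvd_of_dvd hd)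
    rw [Nat.div_div_self hd hK] at hg'
    exact ⟨_, IsPrimitiveRoot.coe_units_iff.mpr hg'⟩
  have hset : {x : K | x ^ d = x} = ↑(insert 0 (Polynomial.nthRootsFinset (d - 1) (1 : K))) := by
    ext x
    simp only [Set.mem_ofPred_eq, coe_insert, Set.mem_insert_iff, mem_coe,
      Polynomial.mem_nthRootsFinset (Nat.pos_of_ne_zero hd₁)]
    constructor
    · intro h
      rcases eq_or_ne x 0 with hx | hx
      · exact Or.inl hx
      · exact Or.inr (pow_sub_one_eq_one_of_pow_eq_self hx h)
    · rintro (rfl | h)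
      · exact zero_pow (by omega)
      · rw [← pow_sub_one_mul (by omega), h, one_mul]
  rw [hset, Set.ncard_coe_finset, card_insert_of_notMem, hζ.card_nthRootsFinset]
  · omega
  · simp [Polynomial.mem_nthRootsFinset (Nat.pos_of_ne_zero hd₁), zero_pow hd₁]

theorem mul_map_mul_sub_map {R : Type*} [CommRing R] (τ : R →+* R) {Y Z c₀ c₁ : R}
    (hc₀ : τ c₀ = c₀) (hc₁ : τ c₁ = c₁) (h : Y * Z = c₁ * Z + c₀) :
    Z * τ Z * (Y - τ Y) = -c₀ * (Z - τ Z) := by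
  have h' := congrArg τ h
  rw [map_mul, map_add, map_mul, hc₀, hc₁] at h'
  linear_combination τ Z * h - Z * h'

theorem exists_map_mul_eq_of_ne {K : Type*} [Field K] (σ τ : K →+* K)
    (hστ : ∀ z, σ (τ z) = τ (σ z)) {a x y ω l : K} (hx : x ≠ 0) (hω : τ ω ≠ ω)
    (hωτ : τ (τ ω) = ω) (hl : τ l ≠ l) (hlτ : τ (τ l) = l)
    (h₁ : a * σ y + y * ω = l * (a * σ x + x * ω))
    (h₂ : a * σ y + y * τ ω = τ l * (a * σ x + x * τ ω)) :
    ∃ c₀ c₁ : K, c₀ ≠ 0 ∧ τ c₀ = c₀ ∧ τ c₁ = c₁ ∧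
      σ (a * σ x / x) * (a * σ x / x) = c₁ * (a * σ x / x) + c₀ := by
  have hD : ω - τ ω ≠ 0 := sub_ne_zero.mpr hω.symm
  have hω₀ : ω ≠ 0 := fun h => hω (by rw [h, map_zero])
  have hfix : ∀ u, τ u = -u → τ (u / (ω - τ ω)) = u / (ω - τ ω) := fun u hu => by
    rw [map_div₀, hu, map_sub, hωτ, neg_div, ← div_neg, neg_sub]
  -- solving `h₁`, `h₂` for `y` and `a * σ y`; `τ` swaps the two equations, so it fixes the `mᵢ`
  set m₁ := (l - τ l) / (ω - τ ω) with hm₁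
  set m₂ := (l * ω - τ l * τ ω) / (ω - τ ω) with hm₂
  set m₃ := (l * τ ω - τ l * ω) / (ω - τ ω) with hm₃
  set m₄ := (l - τ l) * ω * τ ω / (ω - τ ω) with hm₄
  have hm₁τ : τ m₁ = m₁ := hfix _ (by simp only [map_sub, hlτ]; ring)
  have hm₂τ : τ m₂ = m₂ := hfix _ (by simp only [map_sub, map_mul, hlτ, hωτ]; ring)
  have hm₃τ : τ m₃ = m₃ := hfix _ (by simp only [map_sub, map_mul, hlτ, hωτ]; ring)
  have hm₄τ : τ m₄ = m₄ := hfix _ (by simp only [map_sub, map_mul, hlτ, hωτ]; ring)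
  have hm₁0 : m₁ ≠ 0 := div_ne_zero (sub_ne_zero.mpr hl.symm) hD
  have hm₄0 : m₄ ≠ 0 :=
    div_ne_zero (mul_ne_zero (mul_ne_zero (sub_ne_zero.mpr hl.symm) hω₀)
      ((map_ne_zero τ).mpr hω₀)) hD
  have hy : y = m₁ * (a * σ x) + m₂ * x := by
    rw [hm₁, hm₂]; field_simp; linear_combination h₁ - h₂
  have hσy : -(a * σ y) = m₃ * (a * σ x) + m₄ * x := by
    rw [hm₃, hm₄]; field_simp; linear_combination τ ω * h₁ - ω * h₂
  have hσm₁ : σ m₁ ≠ 0 := (map_ne_zero σ).mpr hm₁0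
  refine ⟨-m₄ / σ m₁, -(σ m₂ + m₃) / σ m₁, div_ne_zero (neg_ne_zero.mpr hm₄0) hσm₁, ?_, ?_, ?_⟩
  · rw [map_div₀, map_neg, hm₄τ, ← hστ, hm₁τ]
  · rw [map_div₀, map_neg, map_add, hm₃τ, ← hστ, ← hστ, hm₁τ, hm₂τ]
  · have hσy' := congrArg σ hy
    simp only [map_add, map_mul] at hσy'
    have hkey : σ m₁ * (σ a * σ (σ x) * a) = -(σ m₂ + m₃) * (a * σ x) - m₄ * x := by
      linear_combination (-a) * hσy' - hσy
    clear_value m₁ m₂ m₃ m₄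
    have hσx : σ x ≠ 0 := (map_ne_zero σ).mpr hx
    rw [map_div₀, map_mul]
    field_simp
    linear_combination hkey

section Frobenius

variable {K : Type*} [Field K] {q : ℕ}

theorem ne_zero_of_add_pow (hadd : ∀ x y : K, (x + y) ^ q = x ^ q + y ^ q) : q ≠ 0 := by
  rintro rfl
  simpa using hadd 0 0

def frobeniusPow (hadd : ∀ x y : K, (x + y) ^ q = x ^ q + y ^ q) (m : ℕ) : K →+* K where
  toFun x := x ^ q ^ m
  map_one' := one_pow _
  map_mul' x y := mul_pow x y _
  map_zero' := zero_pow (pow_ne_zero _ (ne_zero_of_add_pow hadd))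
  map_add' x y := by
    induction m with
    | zero => simp
    | succ m ih => simp only [pow_succ, pow_mul, ih, hadd]

@[simp]
theorem frobeniusPow_apply (hadd : ∀ x y : K, (x + y) ^ q = x ^ q + y ^ q) (m : ℕ) (x : K) :
    frobeniusPow hadd m x = x ^ q ^ m :=
  rfl

theorem sq_frobNorm_eq_neg_one_pow_mul (hadd : ∀ x y : K, (x + y) ^ q = x ^ q + y ^ q)
    {n i : ℕ} (hi : i.Coprime (3 * n)) {Z c₀ c₁ : K} (hZ : Z ^ q ^ (3 * n) = Z)
    (hZn : Z ^ q ^ n ≠ Z) (hc₀ : c₀ ^ q ^ n = c₀) (hc₁ : c₁ ^ q ^ n = c₁)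
    (hrel : Z ^ q ^ i * Z = c₁ * Z + c₀) :
    frobNorm q (3 * n) Z ^ 2 = (-1) ^ (3 * n) * frobNorm q n c₀ ^ 3 := by
  set τ := frobeniusPow hadd n
  have hτ : ∀ z : K, τ z = z ^ q ^ n := fun _ => rfl
  have hZt : ∀ t, Z ^ q ^ (i * t) - τ (Z ^ q ^ (i * t))
      = frobeniusPow hadd (i * t) (Z - τ Z) := by
    intro t
    simp only [map_sub, frobeniusPow_apply, hτ, pow_right_comm Z (q ^ n)]
  have hstep : ∀ t < 3 * n, Z ^ q ^ (i * t) * τ (Z ^ q ^ (i * t)) *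
      (Z ^ q ^ (i * (t + 1)) - τ (Z ^ q ^ (i * (t + 1))))
      = -c₀ ^ q ^ (i * t) * (Z ^ q ^ (i * t) - τ (Z ^ q ^ (i * t))) := by
    intro t _
    refine mul_map_mul_sub_map τ (c₁ := c₁ ^ q ^ (i * t)) ?_ ?_ ?_
    · rw [hτ, pow_right_comm, hc₀]
    · rw [hτ, pow_right_comm, hc₁]
    · have h := congrArg (frobeniusPow hadd (i * t)) hrel
      simp only [map_add, map_mul, frobeniusPow_apply] at h
      rwa [← pow_mul, ← pow_add q, add_comm, ← mul_add_one] at h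
  have hZi : Z ^ q ^ (i * (3 * n)) = Z := by simpa using (periodic_pow_pow hZ).nat_mul_eq i
  have hprod := prod_range_eq_of_mul_succ_eq
    (a := fun t => Z ^ q ^ (i * t) * τ (Z ^ q ^ (i * t))) (b := fun t => -c₀ ^ q ^ (i * t))
    (e := fun t => Z ^ q ^ (i * t) - τ (Z ^ q ^ (i * t))) hstep
    (by simp only [mul_zero, pow_zero, pow_one, hZi])
    (fun t _ => by rw [hZt]; exact (map_ne_zero _).mpr (sub_ne_zero.mpr (Ne.symm hZn)))
  have hN : ∏ t ∈ range (3 * n), Z ^ q ^ (i * t) = frobNorm q (3 * n) Z :=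
    prod_pow_pow_mul_eq_frobNorm hZ hi
  have hc₀3 : c₀ ^ q ^ (3 * n) = c₀ := by
    simpa using (periodic_pow_pow hc₀).nat_mul_eq 3
  rw [prod_mul_distrib, ← map_prod, hN, hτ,
    pow_pow_eq_self_of_pow_eq_self (frobNorm_pow_self hZ), prod_neg, card_range,
    prod_pow_pow_mul_eq_frobNorm hc₀3 hi, frobNorm_mul_eq_pow hc₀] at hprod
  rw [sq, hprod]

theorem frobNorm_pow_div_three_eq_one (hadd : ∀ x y : K, (x + y) ^ q = x ^ q + y ^ q)
    (h3 : 3 ∣ q - 1) {n i : ℕ} (hi : i.Coprime (3 * n)) {Z c₀ c₁ : K} (hZ0 : Z ≠ 0)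
    (hZ : Z ^ q ^ (3 * n) = Z) (hc₀0 : c₀ ≠ 0) (hc₀ : c₀ ^ q ^ n = c₀)
    (hc₁ : c₁ ^ q ^ n = c₁) (hrel : Z ^ q ^ i * Z = c₁ * Z + c₀) :
    frobNorm q (3 * n) Z ^ ((q - 1) / 3) = 1 := by
  obtain ⟨G, hG⟩ := h3
  rw [hG, Nat.mul_div_cancel_left _ three_pos]
  suffices ∃ C ε : K, C ^ (q - 1) = 1 ∧ ε ^ 2 = 1 ∧ frobNorm q (3 * n) Z ^ 2 = ε * C ^ 3 by
    obtain ⟨C, ε, hC, hε, h⟩ := this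
    exact pow_eq_one_of_sq_eq_mul_cube (hG ▸ frobNorm_pow_sub_one hZ0 hZ) (hG ▸ hC) hε h
  by_cases hZn : Z ^ q ^ n = Z
  · refine ⟨frobNorm q n Z ^ 2, 1, ?_, one_pow _, ?_⟩
    · rw [← pow_mul, mul_comm, pow_mul, frobNorm_pow_sub_one hZ0 hZn, one_pow]
    · rw [one_mul, frobNorm_mul_eq_pow hZn, ← pow_mul, ← pow_mul, mul_comm]
  · refine ⟨frobNorm q n c₀, (-1) ^ (3 * n), frobNorm_pow_sub_one hc₀0 hc₀, ?_,
      sq_frobNorm_eq_neg_one_pow_mul hadd hi hZ hZn hc₀ hc₁ hrel⟩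
    rw [← pow_mul, mul_comm, pow_mul, neg_one_sq, one_pow]

theorem injOn_mul_pow_add_mul (hadd : ∀ x y : K, (x + y) ^ q = x ^ q + y ^ q) {N i : ℕ}
    {a ω : K} (ha : a ^ q ^ N = a) (hω : ω ^ q ^ N ≠ ω) :
    Set.InjOn (fun x => a * x ^ q ^ i + x * ω) {x | x ^ q ^ N = x} := by
  intro x hx y hy hxy
  set z := x - y
  have hz : z ^ q ^ N = z := by
    simp only [Set.mem_ofPred_eq] at hx hy
    rw [← frobeniusPow_apply hadd, map_sub, frobeniusPow_apply, frobeniusPow_apply, hx, hy]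
  have h₀ : a * z ^ q ^ i + z * ω = 0 := by
    rw [← frobeniusPow_apply hadd, map_sub, frobeniusPow_apply, frobeniusPow_apply]
    linear_combination hxy
  have h₁ := congrArg (frobeniusPow hadd N) h₀
  simp only [map_add, map_mul, map_zero, frobeniusPow_apply, pow_right_comm z (q ^ i), ha, hz]
    at h₁
  have : z * (ω - ω ^ q ^ N) = 0 := by linear_combination h₀ - h₁
  rcases mul_eq_zero.mp this with h | h
  · exact sub_eq_zero.mp h
  · exact absurd (sub_eq_zero.mp h).symm hω

theorem pow_eq_self_of_mul_eq (hadd : ∀ x y : K, (x + y) ^ q = x ^ q + y ^ q)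
    (h3 : 3 ∣ q - 1) {n i : ℕ} (hi : i.Coprime (3 * n)) {a ω : K}
    (ha : a ^ q ^ (3 * n) = a) (ha0 : a ≠ 0)
    (hnorm : frobNorm q (3 * n) a ^ ((q - 1) / 3) ≠ 1)
    (hω₁ : ω ^ q ^ (2 * n) = ω) (hω₂ : ω ^ q ^ n ≠ ω) {x y l : K}
    (hx : x ^ q ^ (3 * n) = x) (hx0 : x ≠ 0) (hy : y ^ q ^ (3 * n) = y)
    (hl : l ^ q ^ (2 * n) = l) (h : a * y ^ q ^ i + y * ω = l * (a * x ^ q ^ i + x * ω)) :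
    l ^ q = l := by
  have hconj : ∀ z : K, z ^ q ^ (2 * n) = z → z ^ q ^ (3 * n) = z ^ q ^ n := fun z hz => by
    rw [show 3 * n = n + 2 * n by ring]
    exact periodic_pow_pow hz n
  have h₂ := congrArg (frobeniusPow hadd (3 * n)) h
  simp only [map_add, map_mul, frobeniusPow_apply, pow_right_comm _ (q ^ i), ha, hx, hy,
    hconj ω hω₁, hconj l hl] at h₂
  by_cases hln : l ^ q ^ n = l
  · rw [hln] at h₂
    have hyx : y = l * x := by
      have : (y - l * x) * (ω - ω ^ q ^ n) = 0 := by linear_combination h - h₂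
      exact sub_eq_zero.mp ((mul_eq_zero.mp this).resolve_right (sub_ne_zero.mpr hω₂.symm))
    have hli : l ^ q ^ i = l := by
      rw [hyx, mul_pow] at h
      have : (l ^ q ^ i - l) * (a * x ^ q ^ i) = 0 := by linear_combination h
      exact sub_eq_zero.mp ((mul_eq_zero.mp this).resolve_right
        (mul_ne_zero ha0 (pow_ne_zero _ hx0)))
    simpa [Nat.Coprime.coprime_mul_left_right hi] using
      pow_pow_gcd_eq_self (ne_zero_of_add_pow hadd) hli hln
  · exfalso
    have hτ : ∀ z : K, z ^ q ^ (2 * n) = z → (z ^ q ^ n) ^ q ^ n = z := fun z hz => by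
      rwa [← pow_mul, ← pow_add, ← two_mul]
    obtain ⟨c₀, c₁, hc₀0, hc₀, hc₁, hrel⟩ :=
      exists_map_mul_eq_of_ne (frobeniusPow hadd i) (frobeniusPow hadd n)
        (fun z => by simp only [frobeniusPow_apply, pow_right_comm z]) hx0 hω₂ (hτ ω hω₁)
        hln (hτ l hl) h h₂
    refine hnorm ?_
    rw [← frobNorm_mul_pow_div a hx0 hx (i := i)]
    refine frobNorm_pow_div_three_eq_one hadd h3 hi
      (div_ne_zero (mul_ne_zero ha0 (pow_ne_zero _ hx0)) hx0) ?_ hc₀0 hc₀ hc₁ hrel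
    rw [div_pow, mul_pow, pow_right_comm x, ha, hx]

end Frobenius

theorem stmt6_general (q n i : ℕ) (hq : IsPrimePow q) (hqmod : q % 3 = 1)
    (hi2 : Nat.gcd i (3 * n) = 1)
    (K : Type*) [Field K] [Fintype K] (hK : Nat.card K = q ^ (6 * n))
    (a : K) (ha : a ^ q ^ (3 * n) = a) (ha0 : a ≠ 0)
    (hnorm : (a ^ ((q ^ (3 * n) - 1) / (q - 1))) ^ ((q - 1) / 3) ≠ 1)
    (ω : K) (hω1 : ω ^ q ^ (2 * n) = ω) (hω2 : ω ^ q ^ n ≠ ω)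
    (U : Set K)
    (hU : U = {z : K | ∃ x : K, x ^ q ^ (3 * n) = x ∧ z = a * x ^ q ^ i + x * ω}) :
    Nat.card U = q ^ (3 * n) ∧
    (∀ u ∈ U, u ≠ 0 → ∀ v ∈ U, v ≠ 0 → ∀ l : K,
        l ^ q ^ (2 * n) = l → v = l * u → l ^ q = l) := by
  obtain ⟨p, k, hp, hk, hpk⟩ := hq
  rw [← Nat.prime_iff] at hp
  have : Fact p.Prime := ⟨hp⟩
  have : CharP K p := charP_of_card_eq_prime_pow (f := k * (6 * n)) (by
    rw [← Nat.card_eq_fintype_card, hK, ← hpk, ← pow_mul])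
  have hadd : ∀ x y : K, (x + y) ^ q = x ^ q + y ^ q := fun x y => hpk ▸ add_pow_char_pow x y p k
  have hq1 : 1 < q := hpk ▸ Nat.one_lt_pow hk.ne' hp.one_lt
  have hnorm' : frobNorm q (3 * n) a ^ ((q - 1) / 3) ≠ 1 := by
    rwa [frobNorm_eq_pow_sum, ← Nat.div_eq_of_eq_mul_left (by omega)
      (geom_sum_mul_of_one_le hq1.le (3 * n)).symm]
  subst hU
  refine ⟨?_, ?_⟩
  · have hω3 : ω ^ q ^ (3 * n) ≠ ω := fun h => hω2 <| by
      simpa [Nat.gcd_mul_right] using pow_pow_gcd_eq_self (ne_zero_of_add_pow hadd) hω1 h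
    have himage : {z : K | ∃ x : K, x ^ q ^ (3 * n) = x ∧ z = a * x ^ q ^ i + x * ω}
        = (fun x => a * x ^ q ^ i + x * ω) '' {x | x ^ q ^ (3 * n) = x} := by
      ext z
      simp only [Set.mem_ofPred_eq, Set.mem_image, eq_comm]
    rw [himage, Nat.card_coe_set_eq, (injOn_mul_pow_add_mul hadd ha hω3).ncard_image,
      ncard_setOf_pow_eq_self]
    rw [← Nat.card_eq_fintype_card, hK, show q ^ (6 * n) = (q ^ (3 * n)) ^ 2 by ring]
    simpa only [one_pow] using Nat.sub_dvd_pow_sub_pow (q ^ (3 * n)) 1 2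
  · rintro _ ⟨x, hx, rfl⟩ hu0 _ ⟨y, hy, rfl⟩ - l hl hvl
    refine pow_eq_self_of_mul_eq hadd (by omega) hi2 ha ha0 hnorm' hω1 hω2 hx ?_ hy hl hvl
    rintro rfl
    exact hu0 (by simp [ne_zero_of_add_pow hadd])

/-- Theorem 3.4 of the paper: for q ≡ 1 (mod 3), n ≥ 2,
gcd(i,2n) = gcd(i,3n) = 1 and a ∈ GF(q^{3n})* with (N_{q^{3n}/q}(a))^{(q-1)/3} ≠ 1,
the set L_U = { GF(q^{2n})·(a x^{q^i} + xω) } is a scattered F_q-linear set of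
rank 3n of PG(2, q^{2n}). -/
theorem stmt6 (q n i : ℕ) (hq : IsPrimePow q) (hqmod : q % 3 = 1) (hn : 2 ≤ n)
    (hi1 : Nat.gcd i (2 * n) = 1) (hi2 : Nat.gcd i (3 * n) = 1)
    (K : Type*) [Field K] [Fintype K] (hK : Nat.card K = q ^ (6 * n))
    (a : K) (ha : a ^ q ^ (3 * n) = a) (ha0 : a ≠ 0)
    (hnorm : (a ^ ((q ^ (3 * n) - 1) / (q - 1))) ^ ((q - 1) / 3) ≠ 1)
    (ω : K) (hω1 : ω ^ q ^ (2 * n) = ω) (hω2 : ω ^ q ^ n ≠ ω)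
    (U : Set K)
    (hU : U = {z : K | ∃ x : K, x ^ q ^ (3 * n) = x ∧ z = a * x ^ q ^ i + x * ω}) :
    Nat.card U = q ^ (3 * n) ∧
    (∀ u ∈ U, u ≠ 0 → ∀ v ∈ U, v ≠ 0 → ∀ l : K,
        l ^ q ^ (2 * n) = l → v = l * u → l ^ q = l) :=
  stmt6_general q n i hq hqmod hi2 K hK a ha ha0 hnorm ω hω1 hω2 U hU
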